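/- arXiv:1511.09389 — 3 statements merged into one kernel-verified Lean document; each statement's English description precedes it below -/
import Mathlib

section
/- Let H = (V, ℰ) be a hypergraph, let G be a representative support for H with vertex set W ⊆ V, and let c : V ∖ W → W be a function such that c(v) covers v for every v ∈ V ∖ W. Then the graph G′ on vertex set V whose edges are the edges of G together with the edges {v, c(v)} for all v ∈ V ∖ W is a support for H; moreover every vertex of V ∖ W has degree one in G′. -/
/-- A hypergraph: a finite vertex set `V ⊆ ℕ` together with a finite family of
hyperedges, each a subset of `V` of size at least 2. -/
structure FinHypergraph where
  V : Finset ℕ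
  E : Finset (Finset ℕ)
  edge_sub : ∀ F ∈ E, F ⊆ V
  edge_card : ∀ F ∈ E, 2 ≤ F.card

namespace FinHypergraph

/-- `ℰ(v)`: the set of hyperedges incident with `v`. -/
def edgesAt (H : FinHypergraph) (v : ℕ) : Finset (Finset ℕ) :=
  H.E.filter (fun F => v ∈ F)

/-- `w` covers `v` if `ℰ(v) ⊆ ℰ(w)`. -/
def Covers (H : FinHypergraph) (w v : ℕ) : Prop :=
  H.edgesAt v ⊆ H.edgesAt w

/-- `u` and `v` are twins if `ℰ(u) = ℰ(v)`. -/
def AreTwins (H : FinHypergraph) (u v : ℕ) : Prop :=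
  H.edgesAt u = H.edgesAt v

/-- The twin class of `v`: all vertices with the same incident hyperedges as `v`. -/
def twinClass (H : FinHypergraph) (v : ℕ) : Finset ℕ :=
  H.V.filter (fun u => H.edgesAt u = H.edgesAt v)

/-- `H − v`: delete vertex `v`, removing it from every hyperedge and discarding
   the resulting sets of size less than 2. -/
def delete (H : FinHypergraph) (v : ℕ) : FinHypergraph where
  V := H.V.erase v
  E := (H.E.image (fun F => F.erase v)).filter (fun F => 2 ≤ F.card)
  edge_sub := by
    intro F hF
    simp only [Finset.mem_filter, Finset.mem_image] at hF
    obtain ⟨⟨F₀, hF₀, rfl⟩, -⟩ := hF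
    intro x hx
    exact Finset.mem_erase.mpr ⟨(Finset.mem_erase.mp hx).1,
      H.edge_sub F₀ hF₀ (Finset.mem_erase.mp hx).2⟩
  edge_card := fun F hF => (Finset.mem_filter.mp hF).2

end FinHypergraph

/-- All edges of the graph `G` have both endpoints in `W`
    (i.e. `G` is a graph on the vertex set `W`). -/
def EdgesWithin (G : SimpleGraph ℕ) (W : Finset ℕ) : Prop :=
  ∀ a b, G.Adj a b → a ∈ W ∧ b ∈ W

/-- `G` is a support for `H`: a graph on the vertex set of `H` in which every
    hyperedge induces a connected subgraph. -/
def IsSupport (H : FinHypergraph) (G : SimpleGraph ℕ) : Prop :=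
  EdgesWithin G H.V ∧ ∀ F ∈ H.E, ((G.induce (F : Set ℕ)).Connected)

/-- `G` is a representative support for `H` with vertex set `W ⊆ H.V`:
    (i) every hyperedge `F` with `|F ∩ W| ≥ 2` induces (on `F ∩ W`) a connected
    subgraph of `G`, and (ii) every vertex outside `W` is covered by a vertex of `W`. -/
def IsRepSupport (H : FinHypergraph) (W : Finset ℕ) (G : SimpleGraph ℕ) : Prop :=
  W ⊆ H.V ∧ EdgesWithin G W ∧
    (∀ F ∈ H.E, 2 ≤ (F ∩ W).card → ((G.induce ((F ∩ W : Finset ℕ) : Set ℕ)).Connected)) ∧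
    (∀ v ∈ H.V \ W, ∃ w ∈ W, H.Covers w v)

/-! Since `c v` covers `v`, every hyperedge `F` containing `v ∉ W` also contains `c v ∈ W`. Hence
`F ∩ W` is nonempty, it is connected in `G` (trivially when it is a single vertex), and every other
vertex of `F` hangs off it by its pendant edge `{v, c v}`. A vertex `v ∉ W` has no edge in `G`, and
no `c u` lies outside `W`, so `{v, c v}` is the only edge at `v`. -/

namespace SimpleGraph

variable {α : Type*}

lemma induce_connected_of_subset_of_forall_adj {G : SimpleGraph α} {s t : Set α}
    (hs : (G.induce s).Connected) (hst : s ⊆ t) (hadj : ∀ x ∈ t, x ∉ s → ∃ y ∈ s, G.Adj y x) :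
    (G.induce t).Connected := by
  obtain ⟨⟨u, hu⟩⟩ := hs.nonempty
  refine G.induce_connected_of_patches u (hst hu) fun {v} hv => ?_
  by_cases hvs : v ∈ s
  · exact ⟨s, hst, hu, hvs, hs.preconnected _ _⟩
  · obtain ⟨y, hy, hyv⟩ := hadj v hv hvs
    have hconn : (G.induce (s ∪ {v})).Connected :=
      connected_induce_union hs.preconnected (by simp) hy rfl hyv
    exact ⟨s ∪ {v}, Set.union_subset hst (Set.singleton_subset_iff.mpr hv), .inl hu, .inr rfl,
      hconn.preconnected _ _⟩

lemma induce_connected_of_card_le_one (G : SimpleGraph α) {s : Finset α} (hs : s.Nonempty)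
    (hcard : s.card ≤ 1) : (G.induce (s : Set α)).Connected := by
  obtain ⟨a, rfl⟩ := Finset.card_eq_one.mp (le_antisymm hcard hs.card_pos)
  rw [Finset.coe_singleton, induce_singleton_eq_top]
  exact connected_top

def pendantGraph (S : Set α) (c : α → α) : SimpleGraph α :=
  fromEdgeSet {e | ∃ v ∈ S, e = s(v, c v)}

lemma pendantGraph_adj {S : Set α} {c : α → α} {a b : α} :
    (pendantGraph S c).Adj a b ↔ ((a ∈ S ∧ b = c a) ∨ (b ∈ S ∧ a = c b)) ∧ a ≠ b := by
  simp only [pendantGraph, fromEdgeSet_adj, Set.mem_ofPred_eq, Sym2.eq_iff]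
  constructor
  · rintro ⟨⟨v, hv, ⟨rfl, rfl⟩ | ⟨rfl, rfl⟩⟩, hab⟩
    exacts [⟨.inl ⟨hv, rfl⟩, hab⟩, ⟨.inr ⟨hv, rfl⟩, hab⟩]
  · rintro ⟨⟨ha, rfl⟩ | ⟨hb, rfl⟩, hab⟩
    exacts [⟨⟨a, ha, .inl ⟨rfl, rfl⟩⟩, hab⟩, ⟨⟨b, hb, .inr ⟨rfl, rfl⟩⟩, hab⟩]

lemma pendantGraph_adj_self {S : Set α} {c : α → α} {v : α} (hv : v ∈ S) (hcv : c v ∉ S) :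
    (pendantGraph S c).Adj v (c v) :=
  pendantGraph_adj.mpr ⟨.inl ⟨hv, rfl⟩, fun h => hcv (h ▸ hv)⟩

lemma existsUnique_adj_sup_pendantGraph {G : SimpleGraph α} {S : Set α} {c : α → α} {v : α}
    (hv : v ∈ S) (hcS : ∀ u ∈ S, c u ∉ S) (hG : ∀ u, ¬ G.Adj v u) :
    ∃! u, (G ⊔ pendantGraph S c).Adj v u := by
  refine ⟨c v, .inr (pendantGraph_adj_self hv (hcS v hv)), fun u hu => ?_⟩
  rcases hu with hu | hu
  · exact absurd hu (hG u)
  · rcases (pendantGraph_adj.mp hu).1 with ⟨-, rfl⟩ | ⟨huS, rfl⟩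
    · rfl
    · exact absurd hv (hcS u huS)

lemma induce_connected_of_core_of_forall_adj [DecidableEq α] {G G' : SimpleGraph α} (hle : G ≤ G')
    {F W : Finset α} (hF : F.Nonempty)
    (hcore : 2 ≤ (F ∩ W).card → (G.induce ((F ∩ W : Finset α) : Set α)).Connected)
    (hpend : ∀ x ∈ F, x ∉ W → ∃ y ∈ F ∩ W, G'.Adj y x) :
    (G'.induce (F : Set α)).Connected := by
  have hcoreNe : (F ∩ W).Nonempty := by
    obtain ⟨x, hx⟩ := hF
    by_cases hxW : x ∈ W
    · exact ⟨x, Finset.mem_inter.mpr ⟨hx, hxW⟩⟩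
    · obtain ⟨y, hy, -⟩ := hpend x hx hxW
      exact ⟨y, hy⟩
  have hcoreConn : (G'.induce ((F ∩ W : Finset α) : Set α)).Connected := by
    rcases le_or_gt 2 (F ∩ W).card with h2 | h1
    · exact (hcore h2).mono fun _ _ h => hle h
    · exact G'.induce_connected_of_card_le_one hcoreNe (by omega)
  refine induce_connected_of_subset_of_forall_adj hcoreConn (by simp) fun x hx hxs => ?_
  exact hpend x hx fun hxW => hxs (by simpa using And.intro hx hxW)

end SimpleGraph

open SimpleGraph

lemma EdgesWithin.sup {G G' : SimpleGraph ℕ} {W : Finset ℕ} (hG : EdgesWithin G W)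
    (hG' : EdgesWithin G' W) : EdgesWithin (G ⊔ G') W := by
  rintro a b (hab | hab)
  exacts [hG a b hab, hG' a b hab]

lemma EdgesWithin.mono {G : SimpleGraph ℕ} {W V : Finset ℕ} (hG : EdgesWithin G W) (hWV : W ⊆ V) :
    EdgesWithin G V :=
  fun a b hab => ⟨hWV (hG a b hab).1, hWV (hG a b hab).2⟩

lemma edgesWithin_pendantGraph {S : Set ℕ} {c : ℕ → ℕ} {V : Finset ℕ}
    (hS : ∀ v ∈ S, v ∈ V ∧ c v ∈ V) : EdgesWithin (pendantGraph S c) V := by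
  intro a b hab
  rcases (pendantGraph_adj.mp hab).1 with ⟨ha, rfl⟩ | ⟨hb, rfl⟩
  exacts [hS a ha, (hS b hb).symm]

lemma FinHypergraph.Covers.mem {H : FinHypergraph} {w v : ℕ} (h : H.Covers w v) {F : Finset ℕ}
    (hF : F ∈ H.E) (hv : v ∈ F) : w ∈ F :=
  (Finset.mem_filter.mp (h (Finset.mem_filter.mpr ⟨hF, hv⟩))).2

lemma FinHypergraph.nonempty_of_mem {H : FinHypergraph} {F : Finset ℕ} (hF : F ∈ H.E) :
    F.Nonempty :=
  Finset.card_pos.mp (by have := H.edge_card F hF; omega)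

/-- Attaching each vertex `v ∈ V ∖ W` as a pendant to a covering
vertex `c v ∈ W` turns a representative support `G` into a support `G'` of `H`,
in which every vertex of `V ∖ W` has degree one. -/
theorem representative_support_extension
    (H : FinHypergraph) (W : Finset ℕ) (G : SimpleGraph ℕ)
    (hG : IsRepSupport H W G)
    (c : ℕ → ℕ)
    (hc : ∀ v ∈ H.V \ W, c v ∈ W ∧ H.Covers (c v) v)
    (G' : SimpleGraph ℕ)
    (hG' : G' = G ⊔ SimpleGraph.fromEdgeSet {e : Sym2 ℕ | ∃ v ∈ H.V \ W, e = s(v, c v)}) :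
    IsSupport H G' ∧ ∀ v ∈ H.V \ W, ∃! u, G'.Adj v u := by
  obtain ⟨hWV, hEW, hconn, -⟩ := hG
  change G' = G ⊔ pendantGraph (H.V \ W : Finset ℕ) c at hG'
  subst hG'
  have hcS : ∀ v ∈ H.V \ W, c v ∉ H.V \ W := fun v hv hcv =>
    (Finset.mem_sdiff.mp hcv).2 (hc v hv).1
  refine ⟨⟨(hEW.mono hWV).sup (edgesWithin_pendantGraph fun v hv =>
      ⟨(Finset.mem_sdiff.mp hv).1, hWV (hc v hv).1⟩), fun F hF => ?_⟩, fun v hv => ?_⟩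
  · refine induce_connected_of_core_of_forall_adj le_sup_left (H.nonempty_of_mem hF) (hconn F hF)
      fun x hx hxW => ?_
    have hxS : x ∈ H.V \ W := Finset.mem_sdiff.mpr ⟨H.edge_sub F hF hx, hxW⟩
    exact ⟨c x, Finset.mem_inter.mpr ⟨(hc x hxS).2.mem hF hx, (hc x hxS).1⟩,
      .inr (pendantGraph_adj_self hxS (hcS x hxS)).symm⟩
  · exact existsUnique_adj_sup_pendantGraph hv hcS fun u hu =>
      (Finset.mem_sdiff.mp hv).2 (hEW v u hu).1
end

section
/- Let G be a support for a hypergraph H = (V, ℰ) and let v ∈ V be a vertex of degree at most one in G. Then the induced subgraph of G on V ∖ {v} is a support for the hypergraph H − v. -/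
/-- The subgraph of `G` induced on the complement of `{v}` (as a graph on `ℕ`):
all edges of `G` avoiding `v`. -/
def SimpleGraph.deleteVertex (G : SimpleGraph ℕ) (v : ℕ) : SimpleGraph ℕ where
  Adj a b := G.Adj a b ∧ a ≠ v ∧ b ≠ v
  symm := ⟨fun a b h => ⟨h.1.symm, h.2.2, h.2.1⟩⟩
  loopless := ⟨fun a h => G.loopless.irrefl a h.1⟩

/-! A vertex with at most one neighbour cannot be an interior vertex of a path, so every path
inside a hyperedge `F` between two vertices other than `v` already lies in `F ∖ {v}`. -/

namespace SimpleGraph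

variable {α : Type*} {G : SimpleGraph α} {s : Set α} {v : α}

theorem Preconnected.induce_diff_singleton (hs : (G.induce s).Preconnected)
    (hv : (G.neighborSet v).Subsingleton) : (G.induce (s \ {v})).Preconnected := by
  have hleaf : ∀ x ∉ {x : s | (x : α) ≠ v}, ((G.induce s).neighborSet x).Subsingleton := by
    rintro ⟨x, hx⟩ hxv a ha b hb
    obtain rfl : x = v := not_not.mp hxv
    exact Subtype.ext (hv ha hb)
  refine (hs.induce_of_degree_eq_one hleaf).map
    (induceHom (Embedding.induce s).toHom fun x hx => ⟨x.2, hx⟩) ?_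
  rintro ⟨x, hxs, hxv⟩
  exact ⟨⟨⟨x, hxs⟩, hxv⟩, rfl⟩

theorem Connected.induce_diff_singleton (hs : (G.induce s).Connected)
    (hv : (G.neighborSet v).Subsingleton) (hne : (s \ {v}).Nonempty) :
    (G.induce (s \ {v})).Connected :=
  have := hne.to_subtype
  ⟨hs.preconnected.induce_diff_singleton hv⟩

theorem induce_deleteVertex_of_notMem {G : SimpleGraph ℕ} {v : ℕ} {s : Set ℕ} (hv : v ∉ s) :
    (G.deleteVertex v).induce s = G.induce s := by
  ext ⟨a, ha⟩ ⟨b, hb⟩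
  exact and_iff_left ⟨ne_of_mem_of_not_mem ha hv, ne_of_mem_of_not_mem hb hv⟩

end SimpleGraph

theorem EdgesWithin.deleteVertex {G : SimpleGraph ℕ} {W : Finset ℕ} (h : EdgesWithin G W)
    (v : ℕ) : EdgesWithin (G.deleteVertex v) (W.erase v) := fun a b ⟨hab, hav, hbv⟩ =>
  ⟨Finset.mem_erase.mpr ⟨hav, (h a b hab).1⟩, Finset.mem_erase.mpr ⟨hbv, (h a b hab).2⟩⟩

theorem FinHypergraph.mem_delete_E {H : FinHypergraph} {v : ℕ} {F' : Finset ℕ} :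
    F' ∈ (H.delete v).E ↔ (∃ F ∈ H.E, F.erase v = F') ∧ 2 ≤ F'.card := by
  simp [FinHypergraph.delete]

theorem support_delete_degree_le_one_general
    (H : FinHypergraph) (G : SimpleGraph ℕ) (hG : IsSupport H G)
    (v : ℕ)
    (hdeg : ∀ a b, G.Adj v a → G.Adj v b → a = b) :
    IsSupport (H.delete v) (G.deleteVertex v) := by
  refine ⟨hG.1.deleteVertex v, fun _ hF' => ?_⟩
  obtain ⟨⟨F, hF, rfl⟩, hcard⟩ := FinHypergraph.mem_delete_E.mp hF'
  have hne : ((F : Set ℕ) \ {v}).Nonempty := by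
    simpa [← Finset.coe_erase] using Finset.card_pos.mp (by omega : 0 < (F.erase v).card)
  rw [Finset.coe_erase, SimpleGraph.induce_deleteVertex_of_notMem (by simp)]
  exact (hG.2 F hF).induce_diff_singleton (fun a ha b hb => hdeg a b ha hb) hne

/-- If `G` is a support for `H` and `v` has degree at most one in `G`,
then the induced subgraph of `G` on `V ∖ {v}` is a support for `H − v`. -/
theorem support_delete_degree_le_one
    (H : FinHypergraph) (G : SimpleGraph ℕ) (hG : IsSupport H G)
    (v : ℕ) (hv : v ∈ H.V)
    (hdeg : ∀ a b, G.Adj v a → G.Adj v b → a = b) :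
    IsSupport (H.delete v) (G.deleteVertex v) :=
  support_delete_degree_le_one_general H G hG v hdeg
end

section
/- Let G be a support for a hypergraph H = (V, ℰ) and let π : V → V be a permutation such that ℰ(π(w)) = ℰ(w) for every w ∈ V (that is, π maps every vertex to a twin of itself). Then the image graph π(G), with edge set {{π(a), π(b)} : {a, b} an edge of G}, is a support for H. -/
/-! Since twins lie in the same hyperedges, `π` maps every hyperedge `F` into itself, hence
bijectively onto itself (`F` is finite and `π` is injective). So `π` restricts to a surjective
homomorphism from `G[F]` onto `π(G)[F]`, and surjective homomorphisms preserve connectedness. -/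

namespace FinHypergraph

lemma mem_iff_mem_of_edgesAt_eq {H : FinHypergraph} {u v : ℕ} {F : Finset ℕ}
    (h : H.edgesAt u = H.edgesAt v) (hF : F ∈ H.E) : u ∈ F ↔ v ∈ F := by
  simpa [edgesAt, hF] using congrArg (F ∈ ·) h

end FinHypergraph

namespace SimpleGraph

variable {V : Type*} {G : SimpleGraph V} {π : V → V}

lemma fromEdgeSet_map_adj_of_adj {a b : V} (hab : G.Adj a b) (hne : π a ≠ π b) :
    (fromEdgeSet (Sym2.map π '' G.edgeSet)).Adj (π a) (π b) :=
  (fromEdgeSet_adj _).2 ⟨⟨s(a, b), hab, Sym2.map_mk ..⟩, hne⟩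

lemma exists_adj_of_fromEdgeSet_map_adj {x y : V}
    (h : (fromEdgeSet (Sym2.map π '' G.edgeSet)).Adj x y) :
    ∃ a b, G.Adj a b ∧ π a = x ∧ π b = y := by
  obtain ⟨⟨e, he, hmap⟩, -⟩ := (fromEdgeSet_adj _).1 h
  induction e with
  | h a b =>
    rcases Sym2.eq_iff.1 ((Sym2.map_mk ..).symm.trans hmap) with ⟨rfl, rfl⟩ | ⟨rfl, rfl⟩
    · exact ⟨a, b, he, rfl, rfl⟩
    · exact ⟨b, a, G.adj_symm he, rfl, rfl⟩

lemma Connected.induce_fromEdgeSet_map {s : Set V} (hG : (G.induce s).Connected)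
    (hπ : Set.BijOn π s s) : ((fromEdgeSet (Sym2.map π '' G.edgeSet)).induce s).Connected := by
  let f : G.induce s →g (fromEdgeSet (Sym2.map π '' G.edgeSet)).induce s :=
    { toFun := hπ.mapsTo.restrict
      map_rel' := fun {x y} hxy =>
        fromEdgeSet_map_adj_of_adj hxy (hπ.injOn.ne x.2 y.2 (Subtype.coe_injective.ne hxy.ne)) }
  exact hG.map f (hπ.mapsTo.restrict_surjective_iff.2 hπ.surjOn)

end SimpleGraph

lemma EdgesWithin.fromEdgeSet_map {G : SimpleGraph ℕ} {W : Finset ℕ} {π : ℕ → ℕ}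
    (hG : EdgesWithin G W) (hπ : Set.MapsTo π (W : Set ℕ) (W : Set ℕ)) :
    EdgesWithin (SimpleGraph.fromEdgeSet (Sym2.map π '' G.edgeSet)) W := by
  intro x y hxy
  obtain ⟨a, b, hab, rfl, rfl⟩ := SimpleGraph.exists_adj_of_fromEdgeSet_map_adj hxy
  exact ⟨hπ (hG a b hab).1, hπ (hG a b hab).2⟩

/-- If `G` is a support for `H` and `π` is a permutation of `V`
mapping every vertex to a twin of itself, then the image graph `π(G)` (with
edge set `{{π a, π b} : {a, b} ∈ E(G)}`) is a support for `H`. -/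
theorem support_image_twin_permutation
    (H : FinHypergraph) (G : SimpleGraph ℕ) (hG : IsSupport H G)
    (π : ℕ → ℕ) (hπ : Set.BijOn π (H.V : Set ℕ) (H.V : Set ℕ))
    (htwin : ∀ w ∈ H.V, H.edgesAt (π w) = H.edgesAt w) :
    IsSupport H (SimpleGraph.fromEdgeSet (Sym2.map π '' G.edgeSet)) := by
  obtain ⟨hGV, hGconn⟩ := hG
  refine ⟨hGV.fromEdgeSet_map hπ.mapsTo, fun F hF => ?_⟩
  have hFV : (F : Set ℕ) ⊆ H.V := H.edge_sub F hF
  have hmaps : Set.MapsTo π (F : Set ℕ) (F : Set ℕ) := fun x hx =>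
    (H.mem_iff_mem_of_edgesAt_eq (htwin x (hFV hx)) hF).2 hx
  exact (hGconn F hF).induce_fromEdgeSet_map
    ((F.finite_toSet.injOn_iff_bijOn_of_mapsTo hmaps).1 (hπ.injOn.mono hFV))
end
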